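/- arXiv:1201.5129 — 3 statements merged into one kernel-verified Lean document; each statement's English description precedes it below -/
import Mathlib

section
/- The function g(y) = (log(cosh y))^{1/2} is subadditive on the nonnegative reals: for all x, y ≥ 0, g(x + y) ≤ g(x) + g(y). -/
/-!
Write `a = log cosh x`, `b = log cosh y`. By the addition formula,
`cosh (x + y) = cosh x cosh y (1 + tanh x tanh y)`, so `log u ≤ u - 1` gives
`log cosh (x + y) ≤ a + b + tanh x tanh y`. Since `1 - tanh² = cosh⁻²`, the same inequality gives
`tanh² ≤ 2 log cosh`, hence `tanh x tanh y ≤ 2 √a √b` and `log cosh (x + y) ≤ (√a + √b)²`.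
-/

namespace Real

theorem one_sub_tanh_sq (x : ℝ) : 1 - tanh x ^ 2 = (cosh x ^ 2)⁻¹ := by
  have := cosh_sq_sub_sinh_sq x
  rw [tanh_eq_sinh_div_cosh]
  field_simp
  linarith

theorem tanh_sq_le_two_mul_log_cosh (x : ℝ) : tanh x ^ 2 ≤ 2 * log (cosh x) := by
  have hlog : log (1 - tanh x ^ 2) = -(2 * log (cosh x)) := by
    rw [one_sub_tanh_sq, log_inv, log_pow, Nat.cast_ofNat]
  have hpos : 0 < 1 - tanh x ^ 2 := sub_pos.2 (tanh_sq_lt_one x)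
  linarith [log_le_sub_one_of_pos hpos]

theorem cosh_add_eq_mul_one_add_tanh_mul_tanh (x y : ℝ) :
    cosh (x + y) = cosh x * cosh y * (1 + tanh x * tanh y) := by
  have hx := (cosh_pos x).ne'
  have hy := (cosh_pos y).ne'
  rw [cosh_add, tanh_eq_sinh_div_cosh, tanh_eq_sinh_div_cosh]
  field_simp

theorem log_cosh_add_le (x y : ℝ) :
    log (cosh (x + y)) ≤ log (cosh x) + log (cosh y) + tanh x * tanh y := by
  have hfactor := cosh_add_eq_mul_one_add_tanh_mul_tanh x y
  have hpos : 0 < 1 + tanh x * tanh y := by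
    have := cosh_pos (x + y)
    rw [hfactor] at this
    exact pos_of_mul_pos_right this (mul_pos (cosh_pos x) (cosh_pos y)).le
  rw [hfactor, log_mul (mul_pos (cosh_pos x) (cosh_pos y)).ne' hpos.ne',
    log_mul (cosh_pos x).ne' (cosh_pos y).ne']
  linarith [log_le_sub_one_of_pos hpos]

theorem abs_tanh_le_sqrt_two_mul_log_cosh (x : ℝ) : |tanh x| ≤ √(2 * log (cosh x)) :=
  abs_le_sqrt (tanh_sq_le_two_mul_log_cosh x)

theorem tanh_mul_tanh_le (x y : ℝ) :
    tanh x * tanh y ≤ 2 * √(log (cosh x)) * √(log (cosh y)) :=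
  calc tanh x * tanh y ≤ |tanh x| * |tanh y| := by rw [← abs_mul]; exact le_abs_self _
    _ ≤ √(2 * log (cosh x)) * √(2 * log (cosh y)) :=
        mul_le_mul (abs_tanh_le_sqrt_two_mul_log_cosh x) (abs_tanh_le_sqrt_two_mul_log_cosh y)
          (abs_nonneg _) (sqrt_nonneg _)
    _ = 2 * √(log (cosh x)) * √(log (cosh y)) := by
        rw [sqrt_mul zero_le_two, sqrt_mul zero_le_two]
        linear_combination (√(log (cosh x)) * √(log (cosh y))) * mul_self_sqrt zero_le_two

end Real

theorem sqrt_log_cosh_subadditive_general (x y : ℝ) :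
    Real.sqrt (Real.log (Real.cosh (x + y))) ≤
      Real.sqrt (Real.log (Real.cosh x)) + Real.sqrt (Real.log (Real.cosh y)) := by
  have ha := Real.sq_sqrt (Real.log_nonneg (Real.one_le_cosh x))
  have hb := Real.sq_sqrt (Real.log_nonneg (Real.one_le_cosh y))
  refine Real.sqrt_le_iff.2 ⟨by positivity, ?_⟩
  linarith [Real.log_cosh_add_le x y, Real.tanh_mul_tanh_le x y]

/-- The function `g(y) = (log (cosh y))^{1/2}` is subadditive on the nonnegative reals. -/
theorem sqrt_log_cosh_subadditive (x y : ℝ) (hx : 0 ≤ x) (hy : 0 ≤ y) :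
    Real.sqrt (Real.log (Real.cosh (x + y))) ≤
      Real.sqrt (Real.log (Real.cosh x)) + Real.sqrt (Real.log (Real.cosh y)) :=
  sqrt_log_cosh_subadditive_general x y
end

section
/- Let F be a nonzero finitely supported sequence in the open unit disc, let N_- be the smallest and N_+ the largest index with F nonzero, and let (a, b) be its nonlinear Fourier transform. Then b, as a Laurent polynomial, has exact lowest degree N_- and exact highest degree N_+, and a has exact lowest degree N_- − N_+ and exact highest degree 0. -/
open LaurentPolynomial

/-- The transfer matrix as a matrix of Laurent polynomials. -/
noncomputable def transferL (F : ℤ → ℂ) (n : ℤ) : Matrix (Fin 2) (Fin 2) (LaurentPolynomial ℂ) :=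
  !![LaurentPolynomial.C (((Real.sqrt (1 - ‖F n‖ ^ 2))⁻¹ : ℝ) : ℂ),
     LaurentPolynomial.C ((((Real.sqrt (1 - ‖F n‖ ^ 2))⁻¹ : ℝ) : ℂ) * F n) * T n;
     LaurentPolynomial.C ((((Real.sqrt (1 - ‖F n‖ ^ 2))⁻¹ : ℝ) : ℂ) *
        (starRingEnd ℂ) (F n)) * T (-n),
     LaurentPolynomial.C (((Real.sqrt (1 - ‖F n‖ ^ 2))⁻¹ : ℝ) : ℂ)]

/-- The nonlinear Fourier transform as a matrix of Laurent polynomials. -/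
noncomputable def nlftL (F : ℤ → ℂ) (s : Finset ℤ) : Matrix (Fin 2) (Fin 2) (LaurentPolynomial ℂ) :=
  ((s.sort (· ≤ ·)).map (transferL F)).prod

/-!
Right multiplication by a transfer matrix acts on each row separately, so it suffices to follow
the first row `(a, b)` of the partial products, and factors with `F n = 0` are the identity.
If `b` spans the degrees `[m, M]` and `a` spans `[m - M, 0]`, appending the factor of an index
`n > M` gives `a' = c a + c conj(F n) z⁻ⁿ b` and `b' = c F n zⁿ a + c b`. In each sum one summand
reaches strictly lower and the other strictly higher, so the extreme coefficients cannot cancel: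
`b'` spans `[m, n]` and `a'` spans `[m - n, 0]`.
-/

theorem Finset.sort_insert_of_forall_lt {α : Type*} [LinearOrder α] {s : Finset α} {a : α}
    (h : ∀ x ∈ s, x < a) : (insert a s).sort (· ≤ ·) = s.sort (· ≤ ·) ++ [a] := by
  have ha : a ∉ s := fun ha => (h a ha).false
  refine List.Perm.eq_of_sortedLE (Finset.sortedLT_sort _).sortedLE ?_ ?_
  · refine List.sortedLE_iff_pairwise.mpr
      (List.pairwise_append.mpr ⟨s.pairwise_sort _, List.pairwise_singleton _ _, ?_⟩)
    simpa using fun x hx => (h x hx).le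
  · rw [← Multiset.coe_eq_coe, ← Multiset.coe_add, Finset.sort_eq, Finset.sort_eq,
      Finset.insert_val_of_notMem ha, ← Multiset.singleton_add, add_comm]
    rfl

namespace LaurentPolynomial

variable {R : Type*} [Semiring R]

def HasExactDegrees (p : R[T;T⁻¹]) (lo hi : ℤ) : Prop :=
  p.coeff lo ≠ 0 ∧ p.coeff hi ≠ 0 ∧ ∀ k, p.coeff k ≠ 0 → lo ≤ k ∧ k ≤ hi

theorem coeff_mul_C_mul_T (p : R[T;T⁻¹]) (c : R) (n k : ℤ) :
    (p * (C c * T n)).coeff k = p.coeff (k - n) * c := by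
  rw [← single_eq_C_mul_T]
  exact AddMonoidAlgebra.coeff_mul_single_apply p c n k

namespace HasExactDegrees

variable {p q : R[T;T⁻¹]} {lo hi : ℤ}

theorem le (h : HasExactDegrees p lo hi) : lo ≤ hi :=
  (h.2.2 lo h.1).2

theorem coeff_eq_zero (h : HasExactDegrees p lo hi) {k : ℤ} (hk : k < lo ∨ hi < k) :
    p.coeff k = 0 := by
  by_contra hk'
  have := h.2.2 k hk'
  omega

theorem add {l₁ h₁ l₂ h₂ : ℤ} (hp : HasExactDegrees p l₁ h₁) (hq : HasExactDegrees q l₂ h₂)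
    (hl : l₂ < l₁) (hh : h₂ < h₁) : HasExactDegrees (p + q) l₂ h₁ := by
  refine ⟨?_, ?_, fun k hk => ?_⟩
  · rw [AddMonoidAlgebra.coeff_add, Finsupp.add_apply, hp.coeff_eq_zero (.inl hl), zero_add]
    exact hq.1
  · rw [AddMonoidAlgebra.coeff_add, Finsupp.add_apply, hq.coeff_eq_zero (.inr hh), add_zero]
    exact hp.2.1
  · rw [AddMonoidAlgebra.coeff_add, Finsupp.add_apply] at hk
    rcases ne_or_eq (p.coeff k) 0 with hpk | hpk
    · have := hp.2.2 k hpk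
      omega
    · rw [hpk, zero_add] at hk
      have := hq.2.2 k hk
      omega

variable [NoZeroDivisors R] {c : R}

theorem mul_C_mul_T (h : HasExactDegrees p lo hi) (hc : c ≠ 0) (n : ℤ) :
    HasExactDegrees (p * (C c * T n)) (lo + n) (hi + n) := by
  simp only [HasExactDegrees, coeff_mul_C_mul_T, add_sub_cancel_right, ne_eq, mul_eq_zero, hc,
    or_false]
  refine ⟨h.1, h.2.1, fun k hk => ?_⟩
  have := h.2.2 _ hk
  omega

theorem mul_C (h : HasExactDegrees p lo hi) (hc : c ≠ 0) : HasExactDegrees (p * C c) lo hi := by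
  simpa using h.mul_C_mul_T hc 0

end HasExactDegrees

theorem hasExactDegrees_C_mul_T {c : R} (hc : c ≠ 0) (n : ℤ) :
    HasExactDegrees (C c * T n) n n := by
  have hcoeff (k : ℤ) : (C c * T n).coeff k = if n = k then c else 0 := by
    rw [← single_eq_C_mul_T, AddMonoidAlgebra.coeff_single, Finsupp.single_apply]
  refine ⟨by simpa [hcoeff], by simpa [hcoeff], fun k hk => ?_⟩
  rw [hcoeff] at hk
  split_ifs at hk with h
  · omega
  · exact (hk rfl).elim

theorem hasExactDegrees_C {c : R} (hc : c ≠ 0) : HasExactDegrees (C c) 0 0 := by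
  simpa using hasExactDegrees_C_mul_T hc 0

end LaurentPolynomial

noncomputable def transferScale (z : ℂ) : ℂ :=
  ((Real.sqrt (1 - ‖z‖ ^ 2))⁻¹ : ℝ)

theorem transferScale_ne_zero {z : ℂ} (hz : ‖z‖ < 1) : transferScale z ≠ 0 := by
  have : 0 < 1 - ‖z‖ ^ 2 := by nlinarith [norm_nonneg z]
  simpa [transferScale] using (Real.sqrt_pos.mpr this).ne'

section Transfer

variable {F : ℤ → ℂ}

theorem transferL_eq (F : ℤ → ℂ) (n : ℤ) :
    transferL F n = !![C (transferScale (F n)), C (transferScale (F n) * F n) * T n;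
      C (transferScale (F n) * starRingEnd ℂ (F n)) * T (-n), C (transferScale (F n))] :=
  rfl

theorem transferL_of_eq_zero {n : ℤ} (h : F n = 0) : transferL F n = 1 := by
  simp [transferL_eq, h, transferScale, Matrix.one_fin_two]

theorem mul_transferL_apply_zero_zero (P : Matrix (Fin 2) (Fin 2) (LaurentPolynomial ℂ)) (n : ℤ) :
    (P * transferL F n) 0 0 = P 0 0 * C (transferScale (F n)) +
      P 0 1 * (C (transferScale (F n) * starRingEnd ℂ (F n)) * T (-n)) := by
  simp [transferL_eq, Matrix.mul_apply]

theorem mul_transferL_apply_zero_one (P : Matrix (Fin 2) (Fin 2) (LaurentPolynomial ℂ)) (n : ℤ) :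
    (P * transferL F n) 0 1 = P 0 0 * (C (transferScale (F n) * F n) * T n) +
      P 0 1 * C (transferScale (F n)) := by
  simp [transferL_eq, Matrix.mul_apply]

theorem nlftL_singleton (F : ℤ → ℂ) (n : ℤ) : nlftL F {n} = transferL F n := by
  simp [nlftL]

theorem nlftL_insert_of_forall_lt {s : Finset ℤ} {n : ℤ} (h : ∀ x ∈ s, x < n) :
    nlftL F (insert n s) = nlftL F s * transferL F n := by
  simp [nlftL, Finset.sort_insert_of_forall_lt h]

theorem nlftL_filter_ne_zero (F : ℤ → ℂ) (s : Finset ℤ) :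
    nlftL F (s.filter (F · ≠ 0)) = nlftL F s := by
  induction s using Finset.induction_on_max with
  | empty => rfl
  | insert n s h ih =>
    have h' : ∀ x ∈ s.filter (F · ≠ 0), x < n := fun x hx => h x (Finset.mem_filter.1 hx).1
    rw [Finset.filter_insert, nlftL_insert_of_forall_lt h]
    split_ifs with hn
    · rw [nlftL_insert_of_forall_lt h', ih]
    · rw [transferL_of_eq_zero (not_not.1 hn), mul_one, ih]

theorem hasExactDegrees_mul_transferL {P : Matrix (Fin 2) (Fin 2) (LaurentPolynomial ℂ)}
    {m M n : ℤ} (ha : HasExactDegrees (P 0 0) (m - M) 0) (hb : HasExactDegrees (P 0 1) m M)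
    (hMn : M < n) (hn : F n ≠ 0) (hFn : ‖F n‖ < 1) :
    HasExactDegrees ((P * transferL F n) 0 0) (m - n) 0 ∧
      HasExactDegrees ((P * transferL F n) 0 1) m n := by
  have hc := transferScale_ne_zero hFn
  have hconj : starRingEnd ℂ (F n) ≠ 0 := (map_ne_zero _).2 hn
  have hmM := hb.le
  rw [mul_transferL_apply_zero_zero, mul_transferL_apply_zero_one]
  constructor
  · have := (ha.mul_C hc).add (hb.mul_C_mul_T (mul_ne_zero hc hconj) (-n)) (by omega) (by omega)
    rwa [← sub_eq_add_neg] at this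
  · have := (ha.mul_C_mul_T (mul_ne_zero hc hn) n).add (hb.mul_C hc) (by omega) (by omega)
    rwa [zero_add] at this

theorem hasExactDegrees_nlftL (t : Finset ℤ) (ht : t.Nonempty) (hF₀ : ∀ n ∈ t, F n ≠ 0)
    (hF : ∀ n ∈ t, ‖F n‖ < 1) :
    HasExactDegrees (nlftL F t 0 0) (t.min' ht - t.max' ht) 0 ∧
      HasExactDegrees (nlftL F t 0 1) (t.min' ht) (t.max' ht) := by
  induction t using Finset.induction_on_max with
  | empty => exact absurd ht Finset.not_nonempty_empty
  | insert n s h ih =>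
    rcases s.eq_empty_or_nonempty with rfl | hs
    · have hc := transferScale_ne_zero (hF n (by simp))
      simp only [insert_empty_eq, Finset.min'_singleton, Finset.max'_singleton, sub_self,
        nlftL_singleton, transferL_eq]
      exact ⟨hasExactDegrees_C hc, hasExactDegrees_C_mul_T (mul_ne_zero hc (hF₀ n (by simp))) n⟩
    · have hmax : s.max' hs < n := h _ (s.max'_mem hs)
      obtain ⟨ha, hb⟩ := ih hs (fun x hx => hF₀ x (by simp [hx])) (fun x hx => hF x (by simp [hx]))
      rw [nlftL_insert_of_forall_lt h, Finset.min'_insert _ _ hs, Finset.max'_insert _ _ hs,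
        min_eq_right ((s.min'_le _ (s.max'_mem hs)).trans hmax.le), max_eq_left hmax.le]
      exact hasExactDegrees_mul_transferL ha hb hmax (hF₀ n (by simp)) (hF n (by simp))

end Transfer

/-- For a nonzero finitely supported sequence `F` with support between `N₋` and `N₊`,
the Laurent polynomial `b` has exact lowest degree `N₋` and exact highest degree `N₊`,
and `a` has exact lowest degree `N₋ − N₊` and exact highest degree `0`. -/
theorem nlft_degrees (F : ℤ → ℂ) (s : Finset ℤ) (hsupp : ∀ n ∉ s, F n = 0)
    (hF : ∀ n, ‖F n‖ < 1) (Nm Np : ℤ)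
    (hNm : F Nm ≠ 0) (hNp : F Np ≠ 0)
    (hbetween : ∀ n, F n ≠ 0 → Nm ≤ n ∧ n ≤ Np) :
    ((nlftL F s 0 1).coeff Nm ≠ 0 ∧ (nlftL F s 0 1).coeff Np ≠ 0 ∧
      (∀ k, (nlftL F s 0 1).coeff k ≠ 0 → Nm ≤ k ∧ k ≤ Np)) ∧
    ((nlftL F s 0 0).coeff (Nm - Np) ≠ 0 ∧ (nlftL F s 0 0).coeff 0 ≠ 0 ∧
      (∀ k, (nlftL F s 0 0).coeff k ≠ 0 → Nm - Np ≤ k ∧ k ≤ 0)) := by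
  set t := s.filter (F · ≠ 0)
  have mem_t {n : ℤ} (hn : F n ≠ 0) : n ∈ t :=
    Finset.mem_filter.2 ⟨not_imp_comm.1 (hsupp n) hn, hn⟩
  have ht : t.Nonempty := ⟨Nm, mem_t hNm⟩
  have hmin : t.min' ht = Nm :=
    (Finset.min'_eq_iff _ _ _).2 ⟨mem_t hNm, fun n hn => (hbetween n (Finset.mem_filter.1 hn).2).1⟩
  have hmax : t.max' ht = Np :=
    (Finset.max'_eq_iff _ _ _).2 ⟨mem_t hNp, fun n hn => (hbetween n (Finset.mem_filter.1 hn).2).2⟩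
  obtain ⟨ha, hb⟩ := hasExactDegrees_nlftL (F := F) t ht (fun n hn => (Finset.mem_filter.1 hn).2)
    (fun n _ => hF n)
  rw [nlftL_filter_ne_zero, hmin, hmax] at ha hb
  exact ⟨hb, ha⟩
end

section
/- Let f be a holomorphic function on the open unit disc D, not identically constant, mapping D into the closed unit disc, such that f and f' extend continuously to the closed disc. If |f| attains the value 1 at a boundary point z with |z| = 1 (i.e. |f(z)| = 1 is the maximum of |f| on the closed disc), then f'(z) = conj(z)·ω·f(z) for some strictly positive real number ω. -/
/-!
Put `q = g(z) z conj(f(z))`. The real derivative of `|f|²` at `z` in the direction `v` is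
`2 Re(g(z) v conj(f(z)))`; it exists within the closed disc because `g` is continuous there.
Since `|f|²` restricted to the circle is maximal at `z`, its derivative in the tangential direction
`i z` vanishes, so `q` is real. Along the radius, composing `f` with the disc automorphism sending
`f(0)` to `0` and applying the Schwarz lemma gives `|f(tz)|² ≤ 1 - c (1 - t)` with
`c = (1 - |f(0)|) / (1 + |f(0)|)`, positive by the strict maximum principle; so the radial
derivative `2 Re q` is at least `c > 0`, and `ω = q` works.
-/

open Metric Set Complex ComplexConjugate Filter Topology

theorem hasDerivWithinAt_closure_of_continuousOn_deriv {E : Type*} [NormedAddCommGroup E]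
    [NormedSpace ℂ E] {f g : ℂ → E} {s : Set ℂ} (s_conv : Convex ℝ s) (s_open : IsOpen s)
    (hf : ContinuousOn f (closure s)) (hg : ContinuousOn g (closure s))
    (hderiv : ∀ w ∈ s, HasDerivAt f (g w) w) {z : ℂ} (hz : z ∈ closure s) :
    HasDerivWithinAt f (g z) (closure s) z := by
  set L : E → ℂ →L[ℝ] E := fun v => ((1 : ℂ →L[ℂ] ℂ).smulRight v).restrictScalars ℝ
  have hL : Continuous L := by fun_prop
  have hfderiv : ∀ w ∈ s, HasFDerivAt f (L (g w)) w := fun w hw =>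
    (hderiv w hw).hasFDerivAt.restrictScalars ℝ
  have hlim : Tendsto (fun y => fderiv ℝ f y) (𝓝[s] z) (𝓝 (L (g z))) := by
    refine ((hL.tendsto _).comp ((hg z hz).mono subset_closure)).congr' ?_
    filter_upwards [self_mem_nhdsWithin] with y hy using (hfderiv y hy).fderiv.symm
  exact (hasFDerivWithinAt_closure_of_tendsto_fderiv
    (fun w hw => (hfderiv w hw).differentiableAt.differentiableWithinAt) s_conv s_open
    (fun y hy => (hf y hy).mono subset_closure) hlim).of_restrictScalars ℝ rfl

theorem norm_lt_of_isPreconnected_of_norm_le {E F : Type*} [NormedAddCommGroup E]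
    [NormedSpace ℂ E] [NormedAddCommGroup F] [NormedSpace ℂ F] [StrictConvexSpace ℝ F]
    {f : E → F} {U : Set E} {M : ℝ} (hc : IsPreconnected U) (ho : IsOpen U)
    (hd : DifferentiableOn ℂ f U) (hle : ∀ w ∈ U, ‖f w‖ ≤ M)
    (hnc : ∃ w ∈ U, ∃ w' ∈ U, f w ≠ f w') {w : E} (hw : w ∈ U) : ‖f w‖ < M := by
  refine (hle w hw).lt_of_ne fun heq => ?_
  have hconst := Complex.eqOn_of_isPreconnected_of_isMaxOn_norm hc ho hd hw
    (fun u hu => by simpa [heq] using hle u hu)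
  obtain ⟨w₁, hw₁, w₂, hw₂, hne⟩ := hnc
  exact hne ((hconst hw₁).trans (hconst hw₂).symm)

noncomputable def blaschkeFactor (a v : ℂ) : ℂ := (v - a) / (1 - conj a * v)

theorem one_sub_norm_le_norm_one_sub_conj_mul {a v : ℂ} (hv : ‖v‖ ≤ 1) :
    1 - ‖a‖ ≤ ‖1 - conj a * v‖ := by
  have : ‖conj a * v‖ ≤ ‖a‖ := by
    rw [norm_mul, norm_conj]
    exact mul_le_of_le_one_right (norm_nonneg a) hv
  calc 1 - ‖a‖ ≤ ‖(1 : ℂ)‖ - ‖conj a * v‖ := by rw [norm_one]; linarith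
    _ ≤ ‖1 - conj a * v‖ := norm_sub_norm_le _ _

theorem sq_norm_one_sub_conj_mul_sub_sq_norm_sub (a v : ℂ) :
    ‖1 - conj a * v‖ ^ 2 - ‖v - a‖ ^ 2 = (1 - ‖v‖ ^ 2) * (1 - ‖a‖ ^ 2) := by
  simp only [Complex.sq_norm, normSq_apply, sub_re, sub_im, mul_re, mul_im, one_re, one_im,
    conj_re, conj_im]
  ring

theorem one_sub_sq_norm_blaschkeFactor {a v : ℂ} (ha : ‖a‖ < 1) (hv : ‖v‖ ≤ 1) :
    1 - ‖blaschkeFactor a v‖ ^ 2 = (1 - ‖v‖ ^ 2) * (1 - ‖a‖ ^ 2) / ‖1 - conj a * v‖ ^ 2 := by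
  have hden : 0 < ‖1 - conj a * v‖ :=
    (sub_pos.2 ha).trans_le (one_sub_norm_le_norm_one_sub_conj_mul hv)
  rw [blaschkeFactor, norm_div, div_pow, ← sq_norm_one_sub_conj_mul_sub_sq_norm_sub, sub_div,
    div_self (by positivity)]

theorem norm_blaschkeFactor_lt_one {a v : ℂ} (ha : ‖a‖ < 1) (hv : ‖v‖ < 1) :
    ‖blaschkeFactor a v‖ < 1 := by
  have hpos : 0 < 1 - ‖blaschkeFactor a v‖ ^ 2 := by
    rw [one_sub_sq_norm_blaschkeFactor ha hv.le]
    have hden := (sub_pos.2 ha).trans_le (one_sub_norm_le_norm_one_sub_conj_mul (a := a) hv.le)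
    exact div_pos (mul_pos (by nlinarith [norm_nonneg v]) (by nlinarith [norm_nonneg a]))
      (pow_pos hden 2)
  nlinarith [norm_nonneg (blaschkeFactor a v)]

theorem one_sub_norm_mul_one_sub_sq_norm_blaschkeFactor_le {a v : ℂ} (ha : ‖a‖ < 1)
    (hv : ‖v‖ ≤ 1) :
    (1 - ‖a‖) * (1 - ‖blaschkeFactor a v‖ ^ 2) ≤ (1 + ‖a‖) * (1 - ‖v‖ ^ 2) := by
  have hA := norm_nonneg a
  have hden := one_sub_norm_le_norm_one_sub_conj_mul (a := a) hv
  have hv2 : 0 ≤ 1 - ‖v‖ ^ 2 := by nlinarith [norm_nonneg v]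
  rw [one_sub_sq_norm_blaschkeFactor ha hv, ← mul_div_assoc, div_le_iff₀ (by nlinarith)]
  calc (1 - ‖a‖) * ((1 - ‖v‖ ^ 2) * (1 - ‖a‖ ^ 2))
      = (1 + ‖a‖) * (1 - ‖v‖ ^ 2) * (1 - ‖a‖) ^ 2 := by ring
    _ ≤ (1 + ‖a‖) * (1 - ‖v‖ ^ 2) * ‖1 - conj a * v‖ ^ 2 := by gcongr

theorem one_sub_norm_mul_one_sub_sq_norm_le_of_mapsTo_ball {f : ℂ → ℂ}
    (hd : DifferentiableOn ℂ f (ball 0 1)) (hf : MapsTo f (ball 0 1) (ball 0 1)) {w : ℂ}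
    (hw : w ∈ ball (0 : ℂ) 1) :
    (1 - ‖f 0‖) * (1 - ‖w‖ ^ 2) ≤ (1 + ‖f 0‖) * (1 - ‖f w‖ ^ 2) := by
  have hA : ‖f 0‖ < 1 := mem_ball_zero_iff.1 (hf (mem_ball_self one_pos))
  set h : ℂ → ℂ := fun v => blaschkeFactor (f 0) (f v)
  have hhd : DifferentiableOn ℂ h (ball 0 1) := by
    refine (hd.sub_const _).div ((differentiableOn_const 1).sub (hd.const_mul _)) ?_
    intro v hv
    have hfv : ‖f v‖ < 1 := mem_ball_zero_iff.1 (hf hv)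
    exact norm_pos_iff.1 <|
      (sub_pos.2 hA).trans_le (one_sub_norm_le_norm_one_sub_conj_mul hfv.le)
  have hmaps : MapsTo h (ball 0 1) (closedBall 0 1) := fun v hv =>
    ball_subset_closedBall <| mem_ball_zero_iff.2 <|
      norm_blaschkeFactor_lt_one hA (mem_ball_zero_iff.1 (hf hv))
  have hschwarz : ‖h w‖ ≤ ‖w‖ :=
    Complex.norm_le_norm_of_mapsTo_ball hhd hmaps (by simp [h, blaschkeFactor])
      (mem_ball_zero_iff.1 hw)
  calc (1 - ‖f 0‖) * (1 - ‖w‖ ^ 2) ≤ (1 - ‖f 0‖) * (1 - ‖h w‖ ^ 2) := by gcongr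
    _ ≤ (1 + ‖f 0‖) * (1 - ‖f w‖ ^ 2) :=
        one_sub_norm_mul_one_sub_sq_norm_blaschkeFactor_le hA (mem_ball_zero_iff.1 (hf hw)).le

theorem sq_norm_le_one_sub_mul_one_sub_norm_of_mapsTo_ball {f : ℂ → ℂ}
    (hd : DifferentiableOn ℂ f (ball 0 1)) (hf : MapsTo f (ball 0 1) (ball 0 1)) {w : ℂ}
    (hw : w ∈ ball (0 : ℂ) 1) :
    ‖f w‖ ^ 2 ≤ 1 - (1 - ‖f 0‖) / (1 + ‖f 0‖) * (1 - ‖w‖) := by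
  have hA : ‖f 0‖ < 1 := mem_ball_zero_iff.1 (hf (mem_ball_self one_pos))
  have hw1 : ‖w‖ < 1 := mem_ball_zero_iff.1 hw
  have := one_sub_norm_mul_one_sub_sq_norm_le_of_mapsTo_ball hd hf hw
  rw [div_mul_eq_mul_div, le_sub_comm, div_le_iff₀ (by positivity)]
  nlinarith [mul_nonneg (sub_nonneg.2 hA.le) (mul_nonneg (norm_nonneg w) (sub_nonneg.2 hw1.le))]

theorem le_of_hasDerivWithinAt_Ico_of_le_sub_mul {φ : ℝ → ℝ} {a b c D : ℝ} (hab : a < b)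
    (hφ : HasDerivWithinAt φ D (Ico a b) b) (hle : ∀ t ∈ Ico a b, φ t ≤ φ b - c * (b - t)) :
    c ≤ D := by
  have hslope := hasDerivWithinAt_iff_tendsto_slope.1 hφ
  rw [sdiff_singleton_eq_self (by simp)] at hslope
  have : (𝓝[Ico a b] b).NeBot := right_nhdsWithin_Ico_neBot hab
  refine ge_of_tendsto hslope ?_
  filter_upwards [self_mem_nhdsWithin] with t ht
  rw [slope_def_field, le_div_iff_of_neg (sub_neg.2 ht.2)]
  linarith [hle t ht]

theorem le_two_mul_re_deriv_mul_mul_conj_of_sq_norm_le {F : ℂ → ℂ} {F' z : ℂ} {c : ℝ}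
    (hF : HasDerivWithinAt F F' (closedBall 0 ‖z‖) z)
    (hle : ∀ t ∈ Ico (0 : ℝ) 1, ‖F (t * z)‖ ^ 2 ≤ ‖F z‖ ^ 2 - c * (1 - t)) :
    c ≤ 2 * (F' * z * conj (F z)).re := by
  set γ : ℝ → ℂ := fun t => t * z
  have hγ : HasDerivWithinAt γ z (Ico 0 1) 1 := by
    simpa using ((hasDerivAt_id (1 : ℝ)).ofReal_comp.mul_const z).hasDerivWithinAt
  have hγmem : MapsTo γ (Ico 0 1) (closedBall 0 ‖z‖) := fun t ht => by
    rw [mem_closedBall_zero_iff, norm_mul, norm_real, Real.norm_of_nonneg ht.1]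
    exact mul_le_of_le_one_left (norm_nonneg z) ht.2.le
  have hcomp := HasDerivWithinAt.comp_of_eq (1 : ℝ) hF hγ hγmem (by simp [γ])
  have := le_of_hasDerivWithinAt_Ico_of_le_sub_mul one_pos hcomp.norm_sq (by simpa [γ] using hle)
  simpa [Complex.inner, γ, mul_assoc] using this

theorem im_deriv_mul_mul_conj_eq_zero_of_isMaxOn_sphere {F : ℂ → ℂ} {F' z : ℂ}
    (hF : HasDerivWithinAt F F' (sphere 0 ‖z‖) z)
    (hmax : IsMaxOn (‖F ·‖) (sphere 0 ‖z‖) z) :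
    (F' * z * conj (F z)).im = 0 := by
  set γ : ℝ → ℂ := fun θ => z * exp (θ * I)
  have hγ0 : γ 0 = z := by simp [γ]
  have hγ : HasDerivAt γ (z * I) 0 := by
    simpa using (((hasDerivAt_id (0 : ℝ)).ofReal_comp.mul_const I).cexp).const_mul z
  have hγmem : MapsTo γ univ (sphere 0 ‖z‖) := fun θ _ => by
    simp [γ, norm_exp_ofReal_mul_I]
  have hcomp : HasDerivAt (fun θ => F (γ θ)) (F' * (z * I)) 0 := by
    have := HasDerivWithinAt.comp_of_eq (0 : ℝ) hF hγ.hasDerivWithinAt hγmem hγ0.symm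
    exact hasDerivWithinAt_univ.1 this
  have hlocmax : IsLocalMax (fun θ => ‖F (γ θ)‖ ^ 2) 0 :=
    Filter.Eventually.of_forall fun θ => by
      have : ‖F (γ θ)‖ ≤ ‖F z‖ := hmax (hγmem (mem_univ θ))
      show ‖F (γ θ)‖ ^ 2 ≤ ‖F (γ 0)‖ ^ 2
      rw [hγ0]
      gcongr
  have := hlocmax.hasDerivAt_eq_zero hcomp.norm_sq
  simp only [Complex.inner, hγ0] at this
  simp only [mul_re, mul_im, I_re, I_im, conj_re, conj_im] at this ⊢
  linarith

theorem exists_pos_eq_conj_mul_mul_of_re_pos_of_im_eq_zero {z u v : ℂ} (hz : ‖z‖ = 1)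
    (hu : ‖u‖ = 1) (hre : 0 < (v * z * conj u).re) (him : (v * z * conj u).im = 0) :
    ∃ ω : ℝ, 0 < ω ∧ v = conj z * ω * u := by
  refine ⟨(v * z * conj u).re, hre, ?_⟩
  have hreal : ((v * z * conj u).re : ℂ) = v * z * conj u := Complex.ext (by simp) (by simp [him])
  rw [hreal]
  have hzz : conj z * z = 1 := by rw [← normSq_eq_conj_mul_self, normSq_eq_norm_sq, hz]; simp
  have huu : conj u * u = 1 := by rw [← normSq_eq_conj_mul_self, normSq_eq_norm_sq, hu]; simp
  linear_combination (-v * conj u * u) * hzz - v * huu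

/-- Boundary version of the maximum principle: if `f` is a nonconstant holomorphic self-map
of the closed unit disc, with `f` and its derivative `g` extending continuously to the
closed disc, and `|f|` attains the value `1` at a boundary point `z`, then
`f'(z) = conj(z)·ω·f(z)` for some strictly positive real `ω`. -/
theorem boundary_maximum_principle (f g : ℂ → ℂ)
    (hf : ContinuousOn f (Metric.closedBall 0 1))
    (hg : ContinuousOn g (Metric.closedBall 0 1))
    (hderiv : ∀ w ∈ Metric.ball (0 : ℂ) 1, HasDerivAt f (g w) w)
    (hnc : ∃ w ∈ Metric.ball (0 : ℂ) 1, ∃ w' ∈ Metric.ball (0 : ℂ) 1, f w ≠ f w')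
    (hbound : ∀ w ∈ Metric.closedBall (0 : ℂ) 1, ‖f w‖ ≤ 1)
    (z : ℂ) (hz : ‖z‖ = 1) (hmax : ‖f z‖ = 1) :
    ∃ ω : ℝ, 0 < ω ∧ g z = (starRingEnd ℂ) z * (ω : ℂ) * f z := by
  have hdiff : DifferentiableOn ℂ f (ball 0 1) := fun w hw =>
    (hderiv w hw).differentiableAt.differentiableWithinAt
  have hmaps : MapsTo f (ball 0 1) (ball 0 1) := fun w hw => mem_ball_zero_iff.2 <|
    norm_lt_of_isPreconnected_of_norm_le (convex_ball 0 1).isPreconnected isOpen_ball hdiff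
      (fun w hw => hbound w (ball_subset_closedBall hw)) hnc hw
  have hzmem : z ∈ closedBall (0 : ℂ) 1 := mem_closedBall_zero_iff.2 hz.le
  have hfz : HasDerivWithinAt f (g z) (closedBall 0 1) z := by
    rw [← closure_ball 0 one_ne_zero] at hf hg hzmem ⊢
    exact hasDerivWithinAt_closure_of_continuousOn_deriv (convex_ball 0 1) isOpen_ball hf hg
      hderiv hzmem
  have hradial : ∀ t ∈ Ico (0 : ℝ) 1,
      ‖f (t * z)‖ ^ 2 ≤ ‖f z‖ ^ 2 - (1 - ‖f 0‖) / (1 + ‖f 0‖) * (1 - t) := fun t ht => by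
    have htz : ‖(t : ℂ) * z‖ = t := by
      rw [norm_mul, norm_real, Real.norm_of_nonneg ht.1, hz, mul_one]
    simpa only [hmax, one_pow, htz] using
      sq_norm_le_one_sub_mul_one_sub_norm_of_mapsTo_ball hdiff hmaps
        (mem_ball_zero_iff.2 (htz.trans_lt ht.2))
  have hA : ‖f 0‖ < 1 := mem_ball_zero_iff.1 (hmaps (mem_ball_self one_pos))
  refine exists_pos_eq_conj_mul_mul_of_re_pos_of_im_eq_zero hz hmax ?_ ?_
  · have := le_two_mul_re_deriv_mul_mul_conj_of_sq_norm_le (hz ▸ hfz) hradial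
    have : 0 < (1 - ‖f 0‖) / (1 + ‖f 0‖) := div_pos (by linarith) (by positivity)
    linarith
  · refine im_deriv_mul_mul_conj_eq_zero_of_isMaxOn_sphere (hfz.mono ?_) fun w hw => ?_
    · rw [hz]; exact sphere_subset_closedBall
    · simpa [hmax] using hbound w (by rw [← hz]; exact sphere_subset_closedBall hw)
end
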